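/- Let I₁, …, Iₙ be ideals over Σ, each given by a reduced representation of length at most k, and let μ_k be the weight function with μ_k(a°) = 1 and μ_k(Δ*) = (k+1)^{|Δ|}, extended additively. If I_m has maximal μ_k-weight among I₁,…,Iₙ and I₁ ∪ ⋯ ∪ Iₙ is itself an ideal, then I₁ ∪ ⋯ ∪ Iₙ = I_m. -/

import Mathlib

def IsDirectedLang {A : Type*} (L : Set (List A)) : Prop :=
  ∀ u ∈ L, ∀ v ∈ L, ∃ w ∈ L, u.Sublist w ∧ v.Sublist w

def dcl {A : Type*} (L : Set (List A)) : Set (List A) := {u | ∃ v ∈ L, u.Sublist v}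

def DownwardClosed {A : Type*} (D : Set (List A)) : Prop :=
  ∀ u v : List A, u.Sublist v → v ∈ D → u ∈ D

def IsIdeal {A : Type*} (I : Set (List A)) : Prop :=
  I.Nonempty ∧ DownwardClosed I ∧ IsDirectedLang I

inductive Atom (A : Type*) where
  | single : A → Atom A
  | alph : Finset A → Atom A

def Atom.lang {A : Type*} : Atom A → Set (List A)
  | .single a => {[], [a]}
  | .alph d => {w | ∀ c ∈ w, c ∈ d}

def Atom.Valid {A : Type*} : Atom A → Prop
  | .single _ => True
  | .alph d => d.Nonempty

def conc {A : Type*} (L M : Set (List A)) : Set (List A) :=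
  {w | ∃ u ∈ L, ∃ v ∈ M, w = u ++ v}

def Idl {A : Type*} : List (Atom A) → Set (List A)
  | [] => {[]}
  | α :: r => conc α.lang (Idl r)

def LeftAbsorbs {A : Type*} (α β : Atom A) : Prop := Idl [α, β] = Idl [α]
def RightAbsorbs {A : Type*} (α β : Atom A) : Prop := Idl [α, β] = Idl [β]
def Absorptive {A : Type*} (α β : Atom A) : Prop := LeftAbsorbs α β ∨ RightAbsorbs α β
def Reduced {A : Type*} (r : List (Atom A)) : Prop := r.Chain' fun α β => ¬ Absorptive α β

def atomWeight {A : Type*} (k : ℕ) : Atom A → ℕ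
  | .single _ => 1
  | .alph d => (k+1) ^ d.card

def repWeight {A : Type*} (k : ℕ) (r : List (Atom A)) : ℕ := (r.map (atomWeight k)).sum

/-!
The sets `Idl (r i)` are downward closed and ideals are prime, so the union, being an ideal,
lies in a single `Idl (r j)`; in particular `Idl (r m) ⊆ Idl (r j)`. The weight is strictly
monotone under strict inclusion of ideals given by valid reduced representations of length
`≤ k`, so maximality of `r m` forces `Idl (r m) = Idl (r j)`, which is then the union.

Monotonicity is proved by induction on the larger representation `β :: s`: if `Idl r ⊆ Idl (β :: s)`
then either `r = β :: r'` with `Idl r' ⊆ Idl s`, or `r = t₁ ++ t₂` with `Idl t₂ ⊆ Idl s` and `t₁`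
lighter than `β`. For `β = Γ*` the prefix `t₁` consists of atoms contained in `Γ*`; since `Γ*`
absorbs such neighbours, reducedness leaves only `t₁ = [Γ*]` or no `Γ*` in `t₁`, and in the
latter case at most `k` atoms strictly inside `Γ*` weigh less than `(k+1)^|Γ|`.
-/

section

open List

variable {A : Type*}

theorem Atom.nil_mem_lang (α : Atom A) : [] ∈ α.lang := by
  cases α <;> simp [Atom.lang]

theorem Atom.eq_nil_or_eq_singleton_of_mem_lang_single {a : A} {x : List A}
    (h : x ∈ (Atom.single a).lang) : x = [] ∨ x = [a] := by
  simpa [Atom.lang] using h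

theorem Atom.append_mem_lang_alph {Γ : Finset A} {u v : List A} (hu : u ∈ (Atom.alph Γ).lang)
    (hv : v ∈ (Atom.alph Γ).lang) : u ++ v ∈ (Atom.alph Γ).lang := by
  intro c hc
  rcases List.mem_append.mp hc with h | h
  exacts [hu c h, hv c h]

theorem Atom.downwardClosed_lang (α : Atom A) : DownwardClosed α.lang := by
  intro u v huv hv
  cases α with
  | single a =>
    rcases Atom.eq_nil_or_eq_singleton_of_mem_lang_single hv with rfl | rfl
    · simp [List.sublist_nil.mp huv, Atom.lang]
    · rcases List.sublist_singleton.mp huv with rfl | rfl <;> simp [Atom.lang]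
  | alph Γ => exact fun c hc => hv c (huv.subset hc)

theorem Atom.exists_cons_mem_lang {α : Atom A} {x u : List A} {d : A} (hx : x ∈ α.lang)
    (hu : u ∈ α.lang) (hd : d ∈ u) : ∃ x', d :: x' ∈ α.lang ∧ x <+ d :: x' := by
  cases α with
  | single a =>
    rcases Atom.eq_nil_or_eq_singleton_of_mem_lang_single hu with rfl | rfl
    · simp at hd
    · rw [List.mem_singleton.mp hd]
      refine ⟨[], by simp [Atom.lang], ?_⟩
      rcases Atom.eq_nil_or_eq_singleton_of_mem_lang_single hx with rfl | rfl <;> simp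
  | alph Γ =>
    refine ⟨x, fun c hc => ?_, List.sublist_cons_self d x⟩
    rcases List.mem_cons.mp hc with rfl | h
    exacts [hu c hd, hx c h]

theorem DownwardClosed.conc {L M : Set (List A)} (hL : DownwardClosed L)
    (hM : DownwardClosed M) : DownwardClosed (conc L M) := by
  rintro u w huw ⟨x, hx, y, hy, rfl⟩
  obtain ⟨u₁, u₂, rfl, h₁, h₂⟩ := List.sublist_append_iff.mp huw
  exact ⟨u₁, hL _ _ h₁ hx, u₂, hM _ _ h₂ hy, rfl⟩

theorem nil_mem_Idl (r : List (Atom A)) : [] ∈ Idl r := by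
  induction r with
  | nil => rfl
  | cons α r ih => exact ⟨[], α.nil_mem_lang, [], ih, rfl⟩

theorem downwardClosed_Idl (r : List (Atom A)) : DownwardClosed (Idl r) := by
  induction r with
  | nil =>
    rintro u v huv (rfl : v = [])
    exact List.sublist_nil.mp huv
  | cons α r ih => exact α.downwardClosed_lang.conc ih

theorem Idl_singleton (β : Atom A) : Idl [β] = β.lang := by
  ext w
  constructor
  · rintro ⟨u, hu, v, (rfl : v = []), rfl⟩
    simpa using hu
  · exact fun h => ⟨w, h, [], rfl, by simp⟩

theorem Idl_subset_Idl_cons (α : Atom A) (r : List (Atom A)) : Idl r ⊆ Idl (α :: r) :=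
  fun v hv => ⟨[], α.nil_mem_lang, v, hv, rfl⟩

theorem IsIdeal.exists_mem_forall_sublist {I : Set (List A)} (hI : IsIdeal I) :
    ∀ l : List (List A), (∀ u ∈ l, u ∈ I) → ∃ w ∈ I, ∀ u ∈ l, u <+ w
  | [], _ => let ⟨w, hw⟩ := hI.1; ⟨w, hw, by simp⟩
  | x :: l, hl => by
    obtain ⟨w', hw', hlw'⟩ := hI.exists_mem_forall_sublist l fun u hu => hl u (by simp [hu])
    obtain ⟨w, hw, hxw, hw'w⟩ := hI.2.2 x (hl x (by simp)) w' hw'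
    refine ⟨w, hw, fun u hu => ?_⟩
    rcases List.mem_cons.mp hu with rfl | hu
    exacts [hxw, (hlw' u hu).trans hw'w]

theorem IsIdeal.exists_subset_of_subset_iUnion {ι : Type*} [Finite ι] {I : Set (List A)}
    (hI : IsIdeal I) {D : ι → Set (List A)} (hD : ∀ i, DownwardClosed (D i))
    (hsub : I ⊆ ⋃ i, D i) : ∃ i, I ⊆ D i := by
  have := Fintype.ofFinite ι
  by_contra! hnot
  choose u huI huD using fun i => Set.not_subset.mp (hnot i)
  obtain ⟨w, hwI, hw⟩ := hI.exists_mem_forall_sublist ((Finset.univ : Finset ι).toList.map u)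
    (by simpa using huI)
  obtain ⟨i, hwi⟩ := Set.mem_iUnion.mp (hsub hwI)
  exact huD i (hD i _ _ (hw (u i) (by simp)) hwi)

theorem leftAbsorbs_alph {Γ : Finset A} {γ : Atom A} (h : γ.lang ⊆ (Atom.alph Γ).lang) :
    LeftAbsorbs (Atom.alph Γ) γ := by
  unfold LeftAbsorbs
  ext w
  simp only [Idl_singleton]
  constructor
  · rintro ⟨u, hu, v, hv, rfl⟩
    rw [Idl_singleton] at hv
    exact Atom.append_mem_lang_alph hu (h hv)
  · exact fun hw => ⟨w, hw, [], nil_mem_Idl _, by simp⟩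

theorem rightAbsorbs_alph {Γ : Finset A} {γ : Atom A} (h : γ.lang ⊆ (Atom.alph Γ).lang) :
    RightAbsorbs γ (Atom.alph Γ) := by
  unfold RightAbsorbs
  ext w
  simp only [Idl_singleton]
  constructor
  · rintro ⟨u, hu, v, hv, rfl⟩
    rw [Idl_singleton] at hv
    exact Atom.append_mem_lang_alph (h hu) hv
  · exact fun hw => ⟨[], γ.nil_mem_lang, w, by rwa [Idl_singleton], rfl⟩

theorem Reduced.eq_singleton_alph {Γ : Finset A} :
    ∀ {l : List (Atom A)}, Reduced l → (∀ γ ∈ l, γ.lang ⊆ (Atom.alph Γ).lang) →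
      Atom.alph Γ ∈ l → l = [Atom.alph Γ]
  | [], _, _, hmem => by simp at hmem
  | [_], _, _, hmem => by rw [List.mem_singleton.mp hmem]
  | α :: β :: l, hred, hsub, hmem => by
    have hnot := (List.isChain_cons_cons.mp hred).1
    by_cases hα : α = Atom.alph Γ
    · subst hα
      exact absurd (Or.inl (leftAbsorbs_alph (hsub β (by simp)))) hnot
    · have htail : β :: l = [Atom.alph Γ] :=
        Reduced.eq_singleton_alph hred.tail (fun γ hγ => hsub γ (List.mem_cons_of_mem α hγ))
          (by simpa [hα, eq_comm] using hmem)
      rw [List.cons.inj htail |>.1] at hnot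
      exact absurd (Or.inr (rightAbsorbs_alph (hsub α (by simp)))) hnot

theorem singleton_mem_lang_of_cons_mem_Idl_cons {β : Atom A} {Q : List (Atom A)} {c : A}
    {u : List A} (h : c :: u ∈ Idl (β :: Q)) (hQ : c :: u ∉ Idl Q) : [c] ∈ β.lang := by
  obtain ⟨y, hy, z, hz, hyz⟩ := h
  cases y with
  | nil => exact absurd (by simpa [hyz] using hz) hQ
  | cons c' y =>
    obtain rfl : c = c' := (List.cons.inj hyz).1
    exact β.downwardClosed_lang _ _ (by simp) hy

theorem mem_Idl_of_cons_mem_Idl_single_cons {b c : A} {Q : List (Atom A)} {u : List A}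
    (h : c :: u ∈ Idl (Atom.single b :: Q)) : u ∈ Idl Q := by
  obtain ⟨y, hy, z, hz, hyz⟩ := h
  rcases Atom.eq_nil_or_eq_singleton_of_mem_lang_single hy with rfl | rfl
  · exact downwardClosed_Idl Q _ _ (List.sublist_cons_self c u) (by simpa [hyz] using hz)
  · simpa [(List.cons.inj hyz).2] using hz

theorem Idl_subset_of_Idl_alph_cons_subset_Idl_single_cons {Δ : Finset A} {b : A}
    {P Q : List (Atom A)} (hΔ : Δ.Nonempty)
    (hsub : Idl (Atom.alph Δ :: P) ⊆ Idl (Atom.single b :: Q)) :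
    Idl (Atom.alph Δ :: P) ⊆ Idl Q := by
  obtain ⟨d, hd⟩ := hΔ
  rintro _ ⟨x, hx, v, hv, rfl⟩
  refine mem_Idl_of_cons_mem_Idl_single_cons (c := d) (hsub ⟨d :: x, ?_, v, hv, rfl⟩)
  intro c hc
  rcases List.mem_cons.mp hc with rfl | hc
  exacts [hd, hx c hc]

theorem Idl_subset_or_of_Idl_single_cons_subset {a b : A} {P Q : List (Atom A)}
    (hsub : Idl (Atom.single a :: P) ⊆ Idl (Atom.single b :: Q)) :
    Idl (Atom.single a :: P) ⊆ Idl Q ∨ a = b ∧ Idl P ⊆ Idl Q := by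
  refine or_iff_not_imp_left.mpr fun hQ => ?_
  obtain ⟨_, ⟨x₀, hx₀, v₀, hv₀, rfl⟩, hw₀Q⟩ := Set.not_subset.mp hQ
  have hav₀ : a :: v₀ ∈ Idl (Atom.single a :: P) := ⟨[a], by simp [Atom.lang], v₀, hv₀, rfl⟩
  have hav₀Q : a :: v₀ ∉ Idl Q := fun h => hw₀Q <| downwardClosed_Idl Q _ _
    (by rcases Atom.eq_nil_or_eq_singleton_of_mem_lang_single hx₀ with rfl | rfl <;> simp) h
  have hab : a = b := by
    simpa [Atom.lang] using singleton_mem_lang_of_cons_mem_Idl_cons (hsub hav₀) hav₀Q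
  exact ⟨hab, fun v hv =>
    mem_Idl_of_cons_mem_Idl_single_cons (hsub ⟨[a], by simp [Atom.lang], v, hv, rfl⟩)⟩

theorem lang_subset_alph_of_Idl_cons_subset {Γ : Finset A} {γ : Atom A} {t Q : List (Atom A)}
    (hsub : Idl (γ :: t) ⊆ Idl (Atom.alph Γ :: Q)) (hQ : ¬ Idl (γ :: t) ⊆ Idl Q) :
    γ.lang ⊆ (Atom.alph Γ).lang := by
  obtain ⟨_, ⟨x₀, hx₀, v₀, hv₀, rfl⟩, hw₀Q⟩ := Set.not_subset.mp hQ
  intro u hu d hd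
  obtain ⟨x, hx, hx₀x⟩ := Atom.exists_cons_mem_lang hx₀ hu hd
  have hmem : d :: (x ++ v₀) ∈ Idl (γ :: t) := ⟨d :: x, hx, v₀, hv₀, rfl⟩
  have hnot : d :: (x ++ v₀) ∉ Idl Q := fun h =>
    hw₀Q (downwardClosed_Idl Q _ _ (hx₀x.append (Sublist.refl v₀)) h)
  exact singleton_mem_lang_of_cons_mem_Idl_cons (hsub hmem) hnot d (by simp)

theorem exists_append_of_Idl_subset_Idl_alph_cons {Γ : Finset A} {Q : List (Atom A)} :
    ∀ {t : List (Atom A)}, Idl t ⊆ Idl (Atom.alph Γ :: Q) →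
      ∃ t₁ t₂, t = t₁ ++ t₂ ∧ (∀ γ ∈ t₁, γ.lang ⊆ (Atom.alph Γ).lang) ∧ Idl t₂ ⊆ Idl Q
  | [], _ => ⟨[], [], rfl, by simp, fun _ (hw : _ = []) => hw ▸ nil_mem_Idl Q⟩
  | γ :: t, hsub => by
    by_cases hQ : Idl (γ :: t) ⊆ Idl Q
    · exact ⟨[], γ :: t, rfl, by simp, hQ⟩
    obtain ⟨t₁, t₂, rfl, h₁, h₂⟩ :=
      exists_append_of_Idl_subset_Idl_alph_cons ((Idl_subset_Idl_cons γ t).trans hsub)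
    refine ⟨γ :: t₁, t₂, rfl, ?_, h₂⟩
    simpa [lang_subset_alph_of_Idl_cons_subset hsub hQ] using h₁

theorem atomWeight_pos (k : ℕ) (α : Atom A) : 0 < atomWeight k α := by
  cases α <;> simp [atomWeight]

@[simp]
theorem repWeight_cons (k : ℕ) (α : Atom A) (r : List (Atom A)) :
    repWeight k (α :: r) = atomWeight k α + repWeight k r := by
  simp [repWeight]

@[simp]
theorem repWeight_append (k : ℕ) (r s : List (Atom A)) :
    repWeight k (r ++ s) = repWeight k r + repWeight k s := by
  simp [repWeight]

theorem atomWeight_mul_succ_le (k : ℕ) {Γ : Finset A} {γ : Atom A}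
    (h : γ.lang ⊆ (Atom.alph Γ).lang) (hne : γ ≠ Atom.alph Γ) :
    atomWeight k γ * (k + 1) ≤ (k + 1) ^ Γ.card := by
  cases γ with
  | single a =>
    have ha : a ∈ Γ := h (a := [a]) (by simp [Atom.lang]) a (by simp)
    simpa [atomWeight] using Nat.le_self_pow (Finset.card_ne_zero_of_mem ha) (k + 1)
  | alph Δ =>
    have hΔ : Δ ⊂ Γ := by
      refine Finset.ssubset_iff_subset_ne.mpr ⟨fun d hd => ?_, fun hΔΓ => hne (hΔΓ ▸ rfl)⟩
      exact h (a := [d]) (by simpa [Atom.lang]) d (by simp)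
    rw [atomWeight, ← pow_succ]
    exact Nat.pow_le_pow_right k.succ_pos (Finset.card_lt_card hΔ)

theorem repWeight_lt_of_forall_lang_subset {k : ℕ} {Γ : Finset A} {l : List (Atom A)}
    (hlen : l.length ≤ k) (h : ∀ γ ∈ l, γ.lang ⊆ (Atom.alph Γ).lang) (hΓ : Atom.alph Γ ∉ l) :
    repWeight k l < (k + 1) ^ Γ.card := by
  refine Nat.lt_of_mul_lt_mul_right (a := k + 1) ?_
  calc repWeight k l * (k + 1) = (l.map fun γ => atomWeight k γ * (k + 1)).sum := by
        simp [repWeight, List.sum_map_mul_right]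
    _ ≤ l.length * (k + 1) ^ Γ.card := by
        simpa using List.sum_le_card_nsmul _ _ (List.forall_mem_map.mpr fun γ hγ =>
          atomWeight_mul_succ_le k (h γ hγ) (ne_of_mem_of_not_mem hγ hΓ))
    _ < (k + 1) ^ Γ.card * (k + 1) := by
        rw [mul_comm]
        exact Nat.mul_lt_mul_of_pos_left (by omega) (by positivity)

theorem Atom.Valid.exists_singleton_mem_lang {α : Atom A} (h : α.Valid) : ∃ c, [c] ∈ α.lang := by
  cases α with
  | single a => exact ⟨a, by simp [Atom.lang]⟩
  | alph Δ =>
    obtain ⟨c, hc⟩ := h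
    exact ⟨c, by simpa [Atom.lang]⟩

theorem eq_nil_of_Idl_subset_Idl_nil {r : List (Atom A)} (hv : ∀ α ∈ r, α.Valid)
    (hsub : Idl r ⊆ Idl []) : r = [] := by
  cases r with
  | nil => rfl
  | cons α r =>
    obtain ⟨c, hc⟩ := (hv α (by simp)).exists_singleton_mem_lang
    exact absurd (hsub ⟨[c], hc, [], nil_mem_Idl r, rfl⟩) (by simp [Idl])

theorem eq_cons_or_exists_append_of_Idl_subset_Idl_cons {k : ℕ} {β : Atom A}
    {r s : List (Atom A)} (hv : ∀ α ∈ r, α.Valid) (hred : Reduced r) (hlen : r.length ≤ k)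
    (hsub : Idl r ⊆ Idl (β :: s)) :
    (∃ r', r = β :: r' ∧ Idl r' ⊆ Idl s) ∨
      ∃ t₁ t₂, r = t₁ ++ t₂ ∧ repWeight k t₁ < atomWeight k β ∧ Idl t₂ ⊆ Idl s := by
  cases β with
  | single b =>
    by_cases hs : Idl r ⊆ Idl s
    · exact Or.inr ⟨[], r, rfl, atomWeight_pos k _, hs⟩
    rcases r with _ | ⟨_ | Δ, r⟩
    · exact absurd (fun _ (hw : _ = []) => hw ▸ nil_mem_Idl s) hs
    · rcases Idl_subset_or_of_Idl_single_cons_subset hsub with h | ⟨rfl, h⟩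
      exacts [absurd h hs, Or.inl ⟨r, rfl, h⟩]
    · exact absurd
        (Idl_subset_of_Idl_alph_cons_subset_Idl_single_cons (hv (.alph Δ) (by simp)) hsub) hs
  | alph Γ =>
    obtain ⟨t₁, t₂, rfl, h₁, h₂⟩ := exists_append_of_Idl_subset_Idl_alph_cons hsub
    by_cases hΓ : Atom.alph Γ ∈ t₁
    · rw [Reduced.eq_singleton_alph hred.left_of_append h₁ hΓ]
      exact Or.inl ⟨t₂, rfl, h₂⟩
    · exact Or.inr ⟨t₁, t₂, rfl,
        repWeight_lt_of_forall_lang_subset (le_trans (by simp) hlen) h₁ hΓ, h₂⟩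

theorem repWeight_le_of_Idl_subset {k : ℕ} {r s : List (Atom A)} (hv : ∀ α ∈ r, α.Valid)
    (hred : Reduced r) (hlen : r.length ≤ k) (hsub : Idl r ⊆ Idl s) :
    repWeight k r ≤ repWeight k s ∧ (Idl r ≠ Idl s → repWeight k r < repWeight k s) := by
  induction s generalizing r with
  | nil => simp [eq_nil_of_Idl_subset_Idl_nil hv hsub]
  | cons β s ih =>
    rcases eq_cons_or_exists_append_of_Idl_subset_Idl_cons hv hred hlen hsub with
      ⟨r, rfl, hrs⟩ | ⟨t₁, t₂, rfl, ht₁, ht₂⟩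
    · obtain ⟨hle, hlt⟩ := ih (r := r) (fun α hα => hv α (by simp [hα])) hred.tail
        (le_trans (by simp) hlen) hrs
      refine ⟨by simpa using hle, fun hne => ?_⟩
      simpa using hlt fun h => hne (congrArg (conc β.lang) h)
    · have hle := (ih (fun α hα => hv α (by simp [hα])) hred.right_of_append
        (le_trans (by simp) hlen) ht₂).1
      have hlt : repWeight k (t₁ ++ t₂) < repWeight k (β :: s) := by
        simp only [repWeight_append, repWeight_cons]
        omega
      exact ⟨hlt.le, fun _ => hlt⟩

theorem repWeight_lt_of_Idl_ssubset {k : ℕ} {r s : List (Atom A)} (hv : ∀ α ∈ r, α.Valid)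
    (hred : Reduced r) (hlen : r.length ≤ k) (hsub : Idl r ⊂ Idl s) :
    repWeight k r < repWeight k s :=
  (repWeight_le_of_Idl_subset hv hred hlen hsub.1).2 hsub.ne

end

theorem max_weight_ideal_is_union {A : Type*} (k n : ℕ)
    (r : Fin n → List (Atom A))
    (hv : ∀ i, ∀ α ∈ r i, α.Valid) (hred : ∀ i, Reduced (r i))
    (hlen : ∀ i, (r i).length ≤ k)
    (m : Fin n) (hmax : ∀ i, repWeight k (r i) ≤ repWeight k (r m))
    (hideal : IsIdeal (⋃ i, Idl (r i))) :
    (⋃ i, Idl (r i)) = Idl (r m) := by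
  obtain ⟨j, hj⟩ := hideal.exists_subset_of_subset_iUnion (fun i => downwardClosed_Idl (r i))
    subset_rfl
  have hmj : Idl (r m) ⊆ Idl (r j) := (Set.subset_iUnion (fun i => Idl (r i)) m).trans hj
  have hjm : Idl (r j) ⊆ Idl (r m) := by
    by_contra hjm
    exact (hmax j).not_gt (repWeight_lt_of_Idl_ssubset (hv m) (hred m) (hlen m) ⟨hmj, hjm⟩)
  exact (hj.trans hjm).antisymm (Set.subset_iUnion (fun i => Idl (r i)) m)
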